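/- Let D be a graph-like ZX-diagram. Then every Pauli semiweb w of D can be written as w = (∏_{b ∈ W'} e_b) · (∏_{ν ∈ B} b_ν) for a unique set B of spiders of D and a unique set W' of boundary wires of D, where · denotes the product of Pauli labellings. -/

import Mathlib

/-- The four Pauli labels. -/
inductive Pauli | I | X | Y | Z
  deriving DecidableEq

instance : Fintype Pauli :=
  ⟨⟨↑[Pauli.I, Pauli.X, Pauli.Y, Pauli.Z], by decide⟩, fun x => by cases x <;> decide⟩

/-- The Pauli matrices as 2×2 complex matrices. -/
def Pauli.mat : Pauli → Matrix (Fin 2) (Fin 2) ℂ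
  | Pauli.I => 1
  | Pauli.X => !![0, 1; 1, 0]
  | Pauli.Y => !![0, -Complex.I; Complex.I, 0]
  | Pauli.Z => !![1, 0; 0, -1]

/-- A wire labelled `p` has X-support if `p ∈ {X, Y}`. -/
def Pauli.hasX : Pauli → Bool
  | Pauli.X => true | Pauli.Y => true | _ => false

/-- A wire labelled `p` has Z-support if `p ∈ {Y, Z}`. -/
def Pauli.hasZ : Pauli → Bool
  | Pauli.Y => true | Pauli.Z => true | _ => false

/-- Node types of a ZX-diagram: Z-spider, X-spider, or H-gate. -/
inductive NodeType | Z | X | H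
  deriving DecidableEq

/-- A ZX-diagram: nodes, wires, adjacency (each wire meets at most two nodes),
types, phases, and input/output wires.  Nodes of type `H` have exactly two wires. -/
structure ZXDiagram (Node Wire : Type) [Fintype Node] [DecidableEq Node]
    [Fintype Wire] [DecidableEq Wire] where
  adj : Node → Wire → Bool
  typ : Node → NodeType
  phase : Node → ℝ
  inputs : Finset Wire
  outputs : Finset Wire
  wire_max_two : ∀ w : Wire, (Finset.univ.filter fun n => adj n w = true).card ≤ 2
  h_deg_two : ∀ n : Node, typ n = NodeType.H →
    (Finset.univ.filter fun w => adj n w = true).card = 2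

variable {Node Wire : Type} [Fintype Node] [DecidableEq Node] [Fintype Wire] [DecidableEq Wire]

/-- Spiders are the nodes of type Z or X. -/
def ZXDiagram.IsSpiderNode (D : ZXDiagram Node Wire) (ν : Node) : Prop :=
  D.typ ν ≠ NodeType.H

/-- Support of the same type as a spider: Z-support for Z-spiders, X-support for X-spiders. -/
def sameSupp : NodeType → Pauli → Bool
  | NodeType.Z, p => p.hasZ
  | NodeType.X, p => p.hasX
  | NodeType.H, _ => false

/-- Support of the opposite type: X-support for Z-spiders, Z-support for X-spiders. -/
def oppSupp : NodeType → Pauli → Bool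
  | NodeType.Z, p => p.hasX
  | NodeType.X, p => p.hasZ
  | NodeType.H, _ => false

/-- The H condition for a Pauli labelling. -/
def HCond (D : ZXDiagram Node Wire) (w : Wire → Pauli) : Prop :=
  ∀ ν j₁ j₂, D.typ ν = NodeType.H → D.adj ν j₁ = true → D.adj ν j₂ = true → j₁ ≠ j₂ →
    (((w j₁).hasX = true) ↔ ((w j₂).hasZ = true)) ∧
    (((w j₁).hasZ = true) ↔ ((w j₂).hasX = true))

/-- The all-or-nothing condition for a Pauli labelling. -/
def AllOrNothing (D : ZXDiagram Node Wire) (w : Wire → Pauli) : Prop :=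
  ∀ ν, D.IsSpiderNode ν →
    (∀ j, D.adj ν j = true → oppSupp (D.typ ν) (w j) = true) ∨
    (∀ j, D.adj ν j = true → oppSupp (D.typ ν) (w j) = false)

/-- A Pauli semiweb is a Pauli labelling satisfying the H and all-or-nothing conditions. -/
def IsSemiweb (D : ZXDiagram Node Wire) (w : Wire → Pauli) : Prop :=
  HCond D w ∧ AllOrNothing D w

/-- The number of wires adjacent to `ν` with support of the same type as `ν`. -/
def sameCount (D : ZXDiagram Node Wire) (w : Wire → Pauli) (ν : Node) : ℕ :=
  (Finset.univ.filter fun j => D.adj ν j = true ∧ sameSupp (D.typ ν) (w j) = true).card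

/-- Some wire adjacent to `ν` has support of the opposite type. -/
def HasOpp (D : ZXDiagram Node Wire) (w : Wire → Pauli) (ν : Node) : Prop :=
  ∃ j, D.adj ν j = true ∧ oppSupp (D.typ ν) (w j) = true

/-- `x` is an odd integer multiple of `π/2`. -/
def IsOddMulHalfPi (x : ℝ) : Prop := ∃ k : ℤ, x = (2 * k + 1) * (Real.pi / 2)

/-- `x` is an integer multiple of `π/2`. -/
def IsMulHalfPi (x : ℝ) : Prop := ∃ k : ℤ, x = k * (Real.pi / 2)

/-- The parity condition at a spider `ν`. -/
def ParityAt (D : ZXDiagram Node Wire) (w : Wire → Pauli) (ν : Node) : Prop :=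
  (¬ IsOddMulHalfPi (D.phase ν) → Even (sameCount D w ν)) ∧
  (IsOddMulHalfPi (D.phase ν) → (Even (sameCount D w ν) ↔ ¬ HasOpp D w ν))

/-- Multiplication in the Pauli group, ignoring phases (X-support and Z-support are
each XORed). -/
def Pauli.mul : Pauli → Pauli → Pauli
  | Pauli.I, p => p
  | p, Pauli.I => p
  | Pauli.X, Pauli.X => Pauli.I
  | Pauli.X, Pauli.Y => Pauli.Z
  | Pauli.X, Pauli.Z => Pauli.Y
  | Pauli.Y, Pauli.X => Pauli.Z
  | Pauli.Y, Pauli.Y => Pauli.I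
  | Pauli.Y, Pauli.Z => Pauli.X
  | Pauli.Z, Pauli.X => Pauli.Y
  | Pauli.Z, Pauli.Y => Pauli.X
  | Pauli.Z, Pauli.Z => Pauli.I

instance : CommMonoid Pauli where
  mul := Pauli.mul
  one := Pauli.I
  mul_assoc := by decide
  one_mul := by decide
  mul_one := by decide
  mul_comm := by decide

variable {Node Wire : Type} [Fintype Node] [DecidableEq Node] [Fintype Wire] [DecidableEq Wire]

/-- The H-node `h` connects the spiders `s₁` and `s₂` via its two wires. -/
def HConnects (D : ZXDiagram Node Wire) (h s₁ s₂ : Node) : Prop :=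
  ∃ j₁ j₂ : Wire, j₁ ≠ j₂ ∧ D.adj h j₁ = true ∧ D.adj h j₂ = true ∧
    D.adj s₁ j₁ = true ∧ D.adj s₂ j₂ = true

/-- A ZX-diagram is graph-like. -/
def GraphLike (D : ZXDiagram Node Wire) : Prop :=
  -- every spider has type Z and is adjacent to at least one wire
  (∀ ν, D.IsSpiderNode ν → D.typ ν = NodeType.Z ∧ ∃ j, D.adj ν j = true) ∧
  -- every internal wire is adjacent to exactly two nodes: one spider, one H-node
  (∀ j : Wire, j ∉ D.inputs → j ∉ D.outputs →
    ∃ s h : Node, D.typ s = NodeType.Z ∧ D.typ h = NodeType.H ∧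
      D.adj s j = true ∧ D.adj h j = true ∧
      ∀ ν, D.adj ν j = true → ν = s ∨ ν = h) ∧
  -- no self-loops
  (∀ h s j₁ j₂, D.typ h = NodeType.H → D.IsSpiderNode s → j₁ ≠ j₂ →
    D.adj h j₁ = true → D.adj h j₂ = true →
    ¬ (D.adj s j₁ = true ∧ D.adj s j₂ = true)) ∧
  -- no parallel edges
  (∀ h₁ h₂ s₁ s₂, D.typ h₁ = NodeType.H → D.typ h₂ = NodeType.H → h₁ ≠ h₂ →
    HConnects D h₁ s₁ s₂ → ¬ HConnects D h₂ s₁ s₂) ∧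
  -- boundary wires are adjacent to exactly one node, a spider
  (∀ j, j ∈ D.inputs ∪ D.outputs →
    ∃ s, D.typ s = NodeType.Z ∧ D.adj s j = true ∧ ∀ ν, D.adj ν j = true → ν = s) ∧
  -- every spider meets at most one input and at most one output wire
  (∀ s j₁ j₂, D.IsSpiderNode s → j₁ ∈ D.inputs → j₂ ∈ D.inputs →
    D.adj s j₁ = true → D.adj s j₂ = true → j₁ = j₂) ∧
  (∀ s j₁ j₂, D.IsSpiderNode s → j₁ ∈ D.outputs → j₂ ∈ D.outputs →
    D.adj s j₁ = true → D.adj s j₂ = true → j₁ = j₂)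

open Classical in
/-- The basic semiweb `b_ν` of a spider `ν`: it labels every wire adjacent to `ν` with `X`,
labels with `Z` the other wire of every H-node one of whose wires is adjacent to `ν`, and
labels all remaining wires with `I`. -/
noncomputable def basicSemiweb (D : ZXDiagram Node Wire) (ν : Node) : Wire → Pauli :=
  fun j =>
    if D.adj ν j = true then Pauli.X
    else if ∃ h j', D.typ h = NodeType.H ∧ D.adj h j = true ∧ D.adj h j' = true ∧
        j ≠ j' ∧ D.adj ν j' = true then Pauli.Z
    else Pauli.I

/-- The edge semiweb `e_b` of a boundary wire `b`: it labels `b` with `Z` and all other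
wires with `I`. -/
def edgeSemiweb (b : Wire) : Wire → Pauli :=
  fun j => if j = b then Pauli.Z else Pauli.I

/-! ### Auxiliary lemmas -/

lemma Pauli.one_eq : (1 : Pauli) = Pauli.I := rfl

lemma spider_of_Z {D : ZXDiagram Node Wire} {s : Node} (h : D.typ s = NodeType.Z) :
    D.IsSpiderNode s := by
  rw [ZXDiagram.IsSpiderNode, h]; exact fun hh => NodeType.noConfusion hh

/-- Evaluation of the product of edge semiwebs at a wire. -/
lemma edge_prod_apply (W₁ : Finset Wire) (j : Wire) :
    (W₁.prod fun b => edgeSemiweb b) j = if j ∈ W₁ then Pauli.Z else 1 := by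
  classical
  rw [Finset.prod_apply]
  have hv : ∀ b, edgeSemiweb b j = if j = b then Pauli.Z else 1 := fun b => rfl
  simp only [hv]
  exact Finset.prod_ite_eq W₁ j fun _ => Pauli.Z

/-- Structure of an internal wire in a graph-like diagram. -/
lemma internal_data (D : ZXDiagram Node Wire) (hD : GraphLike D) {j : Wire}
    (h1 : j ∉ D.inputs) (h2 : j ∉ D.outputs) :
    ∃ s h j' s', D.typ s = NodeType.Z ∧ D.typ h = NodeType.H ∧
      D.adj s j = true ∧ D.adj h j = true ∧
      (∀ ν, D.adj ν j = true → ν = s ∨ ν = h) ∧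
      D.adj h j' = true ∧ j ≠ j' ∧
      (∀ j₂, D.adj h j₂ = true → j₂ = j ∨ j₂ = j') ∧
      D.typ s' = NodeType.Z ∧ D.adj s' j' = true ∧
      (∀ ν, D.adj ν j' = true → ν = s' ∨ ν = h) ∧ s ≠ s' := by
  classical
  obtain ⟨hZsp, hInt, hSelf, hPar, hBdry, -, -⟩ := hD
  obtain ⟨s, h, hsZ, hhH, hsj, hhj, huniq⟩ := hInt j h1 h2
  have hcard := D.h_deg_two h hhH
  have hjF : j ∈ Finset.univ.filter (fun x => D.adj h x = true) := by simp [hhj]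
  have hne : ((Finset.univ.filter fun x => D.adj h x = true).erase j).Nonempty := by
    rw [← Finset.card_pos, Finset.card_erase_of_mem hjF, hcard]
    norm_num
  obtain ⟨j', hj'⟩ := hne
  have hj'F : j' ∈ Finset.univ.filter (fun x => D.adj h x = true) := Finset.mem_of_mem_erase hj'
  have hjj' : j ≠ j' := fun e => (Finset.ne_of_mem_erase hj') e.symm
  have hhj' : D.adj h j' = true := (Finset.mem_filter.mp hj'F).2
  have hwires : ∀ j₂, D.adj h j₂ = true → j₂ = j ∨ j₂ = j' := by
    intro j₂ hj₂
    have hsub : ({j, j'} : Finset Wire) ⊆ Finset.univ.filter (fun x => D.adj h x = true) := by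
      intro x hx
      rcases Finset.mem_insert.mp hx with rfl | hx
      · exact hjF
      · rw [Finset.mem_singleton.mp hx]; exact hj'F
    have hcard2 : ({j, j'} : Finset Wire).card = 2 := by
      rw [Finset.card_insert_of_notMem (by simp [hjj']), Finset.card_singleton]
    have heq := Finset.eq_of_subset_of_card_le hsub (by rw [hcard, hcard2])
    have hmem : j₂ ∈ ({j, j'} : Finset Wire) := by rw [heq]; simp [hj₂]
    simpa using hmem
  have hj'int : j' ∉ D.inputs ∧ j' ∉ D.outputs := by
    by_contra hcon
    have hb : j' ∈ D.inputs ∪ D.outputs := by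
      rcases not_and_or.mp hcon with hc | hc
      · exact Finset.mem_union_left _ (not_not.mp hc)
      · exact Finset.mem_union_right _ (not_not.mp hc)
    obtain ⟨s₀, hs₀Z, -, huniq₀⟩ := hBdry j' hb
    have he := huniq₀ h hhj'
    rw [he] at hhH
    exact NodeType.noConfusion (hs₀Z.symm.trans hhH)
  obtain ⟨s₂, h₂, hs₂Z, hh₂H, hs₂j', hh₂j', huniq₂⟩ := hInt j' hj'int.1 hj'int.2
  have hh₂ : h₂ = h := by
    rcases huniq₂ h hhj' with he | he
    · exfalso; rw [he] at hhH; exact NodeType.noConfusion (hs₂Z.symm.trans hhH)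
    · exact he.symm
  have hss₂ : s ≠ s₂ := by
    intro he
    exact hSelf h s j j' hhH (spider_of_Z hsZ) hjj' hhj hhj' ⟨hsj, by rw [he]; exact hs₂j'⟩
  refine ⟨s, h, j', s₂, hsZ, hhH, hsj, hhj, huniq, hhj', hjj', hwires, hs₂Z, hs₂j', ?_, hss₂⟩
  intro ν hν
  rcases huniq₂ ν hν with he | he
  · exact Or.inl he
  · exact Or.inr (he.trans hh₂)

/-- Evaluation of the product of basic semiwebs at a boundary wire. -/
lemma basic_prod_boundary (D : ZXDiagram Node Wire) {j : Wire} {s : Node}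
    (hsadj : D.adj s j = true) (hsZ : D.typ s = NodeType.Z)
    (huniq : ∀ ν, D.adj ν j = true → ν = s)
    (B : Finset Node) :
    (B.prod fun ν => basicSemiweb D ν) j = if s ∈ B then Pauli.X else 1 := by
  classical
  rw [Finset.prod_apply]
  have hval : ∀ ν, basicSemiweb D ν j = if ν = s then Pauli.X else 1 := by
    intro ν
    by_cases hadj : D.adj ν j = true
    · simp only [basicSemiweb]
      rw [if_pos hadj, if_pos (huniq ν hadj)]
    · have hne : ν ≠ s := fun e => hadj (e ▸ hsadj)
      have hno : ¬ ∃ h j', D.typ h = NodeType.H ∧ D.adj h j = true ∧ D.adj h j' = true ∧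
          j ≠ j' ∧ D.adj ν j' = true := by
        rintro ⟨h, j', hH, hhj, -⟩
        have he := huniq h hhj
        rw [he] at hH
        exact NodeType.noConfusion (hsZ.symm.trans hH)
      simp only [basicSemiweb]
      rw [if_neg hadj, if_neg hno, if_neg hne]
      rfl
  simp only [hval]
  exact Finset.prod_ite_eq' B s fun _ => Pauli.X

/-- Evaluation of the product of basic semiwebs at an internal wire. -/
lemma basic_prod_internal (D : ZXDiagram Node Wire) {j j' : Wire} {s h s' : Node}
    (hsZ : D.typ s = NodeType.Z) (hhH : D.typ h = NodeType.H)
    (hsj : D.adj s j = true) (hhj : D.adj h j = true)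
    (huniq : ∀ ν, D.adj ν j = true → ν = s ∨ ν = h)
    (hhj' : D.adj h j' = true) (hjj' : j ≠ j')
    (hwires : ∀ j₂, D.adj h j₂ = true → j₂ = j ∨ j₂ = j')
    (hs'j' : D.adj s' j' = true)
    (huniq' : ∀ ν, D.adj ν j' = true → ν = s' ∨ ν = h)
    (hss' : s ≠ s')
    (B : Finset Node) (hB : ∀ ν ∈ B, D.IsSpiderNode ν) :
    (B.prod fun ν => basicSemiweb D ν) j
      = (if s ∈ B then Pauli.X else 1) * (if s' ∈ B then Pauli.Z else 1) := by
  classical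
  rw [Finset.prod_apply]
  have hval : ∀ ν ∈ B, basicSemiweb D ν j
      = (if ν = s then Pauli.X else 1) * (if ν = s' then Pauli.Z else 1) := by
    intro ν hνB
    have hνsp := hB ν hνB
    by_cases hνs : ν = s
    · subst hνs
      simp only [basicSemiweb]
      rw [if_pos hsj]
      simp [hss']
    · have hadj : ¬ D.adj ν j = true := by
        intro hadj
        rcases huniq ν hadj with he | he
        · exact hνs he
        · rw [he] at hνsp; exact hνsp hhH
      by_cases hνs' : ν = s'
      · subst hνs'
        have hZc : ∃ h₂ j₂, D.typ h₂ = NodeType.H ∧ D.adj h₂ j = true ∧ D.adj h₂ j₂ = true ∧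
            j ≠ j₂ ∧ D.adj ν j₂ = true := ⟨h, j', hhH, hhj, hhj', hjj', hs'j'⟩
        simp only [basicSemiweb]
        rw [if_neg hadj, if_pos hZc, if_neg hνs]
        simp
      · have hZc : ¬ ∃ h₂ j₂, D.typ h₂ = NodeType.H ∧ D.adj h₂ j = true ∧ D.adj h₂ j₂ = true ∧
            j ≠ j₂ ∧ D.adj ν j₂ = true := by
          rintro ⟨h₂, j₂, hH₂, hh₂j, hh₂j₂, hnej, hνj₂⟩
          have hh₂ : h₂ = h := by
            rcases huniq h₂ hh₂j with he | he
            · exfalso; rw [he] at hH₂; exact NodeType.noConfusion (hsZ.symm.trans hH₂)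
            · exact he
          subst hh₂
          have hj₂ : j₂ = j' := by
            rcases hwires j₂ hh₂j₂ with he | he
            · exact absurd he (fun e => hnej e.symm)
            · exact he
          subst hj₂
          rcases huniq' ν hνj₂ with he | he
          · exact hνs' he
          · rw [he] at hνsp; exact hνsp hhH
        simp only [basicSemiweb]
        rw [if_neg hadj, if_neg hZc, if_neg hνs, if_neg hνs']
        rfl
  rw [Finset.prod_congr rfl hval, Finset.prod_mul_distrib,
    Finset.prod_ite_eq' B s fun _ => Pauli.X, Finset.prod_ite_eq' B s' fun _ => Pauli.Z]

/-- Every Pauli semiweb of a graph-like ZX-diagram decomposes uniquely as a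
product of edge semiwebs over a set of boundary wires and basic semiwebs over a set of
spiders. -/
theorem semiweb_unique_decomposition (D : ZXDiagram Node Wire) (hD : GraphLike D)
    (w : Wire → Pauli) (hw : IsSemiweb D w) :
    ∃! p : Finset Node × Finset Wire,
      (∀ ν ∈ p.1, D.IsSpiderNode ν) ∧ (p.2 ⊆ D.inputs ∪ D.outputs) ∧
      w = (p.2.prod fun b => edgeSemiweb b) * (p.1.prod fun ν => basicSemiweb D ν) := by
  classical
  obtain ⟨hZsp, hInt, hSelf, hPar, hBdry, hIn, hOut⟩ := id hD
  obtain ⟨hH, hAON⟩ := hw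
  set B : Finset Node := Finset.univ.filter
    (fun ν => D.IsSpiderNode ν ∧ ∀ j, D.adj ν j = true → (w j).hasX = true) with hBdef
  set W' : Finset Wire := (D.inputs ∪ D.outputs).filter (fun b => (w b).hasZ = true) with hWdef
  have hBsp : ∀ ν ∈ B, D.IsSpiderNode ν := fun ν hν => ((Finset.mem_filter.mp hν).2).1
  have hWsub : W' ⊆ D.inputs ∪ D.outputs := Finset.filter_subset _ _
  have memB : ∀ s j, D.IsSpiderNode s → D.adj s j = true → (s ∈ B ↔ (w j).hasX = true) := by
    intro s j hs hadj
    constructor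
    · intro hsB; exact ((Finset.mem_filter.mp hsB).2).2 j hadj
    · intro hX
      refine Finset.mem_filter.mpr ⟨Finset.mem_univ _, hs, ?_⟩
      intro j₂ hadj₂
      rcases hAON s hs with hall | hnone
      · have := hall j₂ hadj₂
        rw [(hZsp s hs).1] at this
        simpa [oppSupp] using this
      · have := hnone j hadj
        rw [(hZsp s hs).1] at this
        simp only [oppSupp] at this
        rw [this] at hX
        exact absurd hX (by simp)
  have memW : ∀ b ∈ D.inputs ∪ D.outputs, (b ∈ W' ↔ (w b).hasZ = true) := by
    intro b hb
    simp [hWdef, Finset.mem_filter, hb]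
  refine ⟨⟨B, W'⟩, ⟨hBsp, hWsub, ?_⟩, ?_⟩
  · funext j
    rw [Pi.mul_apply, edge_prod_apply]
    by_cases hbd : j ∈ D.inputs ∪ D.outputs
    · obtain ⟨s, hsZ, hsj, huniq⟩ := hBdry j hbd
      rw [basic_prod_boundary D hsj hsZ huniq B]
      rw [if_congr (memW j hbd) rfl rfl, if_congr (memB s j (spider_of_Z hsZ) hsj) rfl rfl]
      cases hwj : w j <;> rfl
    · have hni : j ∉ D.inputs := fun hc => hbd (Finset.mem_union_left _ hc)
      have hno : j ∉ D.outputs := fun hc => hbd (Finset.mem_union_right _ hc)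
      obtain ⟨s, h, j', s', hsZ, hhH, hsj, hhj, huniq, hhj', hjj', hwires, hs'Z, hs'j',
        huniq', hss'⟩ := internal_data D hD hni hno
      rw [basic_prod_internal D hsZ hhH hsj hhj huniq hhj' hjj' hwires hs'j' huniq' hss' B hBsp]
      have hjW : j ∉ W' := fun hc => hbd (hWsub hc)
      rw [if_neg hjW, one_mul]
      have h3 : s' ∈ B ↔ (w j).hasZ = true := by
        rw [memB s' j' (spider_of_Z hs'Z) hs'j']
        exact ((hH h j j' hhH hhj hhj' hjj').2).symm
      rw [if_congr (memB s j (spider_of_Z hsZ) hsj) rfl rfl, if_congr h3 rfl rfl]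
      cases hwj : w j <;> rfl
  · rintro ⟨B₁, W₁⟩ ⟨hB₁, hW₁, hpw⟩
    have keyX : ∀ s j, D.IsSpiderNode s → D.adj s j = true → (s ∈ B₁ ↔ (w j).hasX = true) := by
      intro s j hssp hsj
      by_cases hbd : j ∈ D.inputs ∪ D.outputs
      · obtain ⟨s₀, hs₀Z, hs₀j, huniq⟩ := hBdry j hbd
        have hs : s = s₀ := huniq s hsj
        subst hs
        rw [hpw, Pi.mul_apply, edge_prod_apply, basic_prod_boundary D hs₀j hs₀Z huniq B₁]
        by_cases hm : s ∈ B₁ <;> by_cases hm2 : j ∈ W₁ <;>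
          simp [hm, hm2] <;> decide
      · have hni : j ∉ D.inputs := fun hc => hbd (Finset.mem_union_left _ hc)
        have hno : j ∉ D.outputs := fun hc => hbd (Finset.mem_union_right _ hc)
        obtain ⟨s₀, h, j', s', hsZ, hhH, hs₀j, hhj, huniq, hhj', hjj', hwires, hs'Z, hs'j',
          huniq', hss'⟩ := internal_data D hD hni hno
        have hs : s = s₀ := by
          rcases huniq s hsj with he | he
          · exact he
          · exfalso; rw [he] at hssp; exact hssp hhH
        subst hs
        rw [hpw, Pi.mul_apply, edge_prod_apply,
          basic_prod_internal D hsZ hhH hs₀j hhj huniq hhj' hjj' hwires hs'j' huniq' hss' B₁ hB₁]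
        have hjW : j ∉ W₁ := fun hc => hbd (hW₁ hc)
        rw [if_neg hjW, one_mul]
        by_cases hm : s ∈ B₁ <;> by_cases hm2 : s' ∈ B₁ <;>
          simp [hm, hm2] <;> decide
    have keyZ : ∀ b ∈ D.inputs ∪ D.outputs, (b ∈ W₁ ↔ (w b).hasZ = true) := by
      intro b hb
      obtain ⟨s₀, hs₀Z, hs₀j, huniq⟩ := hBdry b hb
      rw [hpw, Pi.mul_apply, edge_prod_apply, basic_prod_boundary D hs₀j hs₀Z huniq B₁]
      by_cases hm : s₀ ∈ B₁ <;> by_cases hm2 : b ∈ W₁ <;>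
        simp [hm, hm2] <;> decide
    have hB₁B : B₁ = B := by
      ext ν
      by_cases hsp : D.IsSpiderNode ν
      · obtain ⟨-, j, hνj⟩ := hZsp ν hsp
        rw [keyX ν j hsp hνj, memB ν j hsp hνj]
      · constructor
        · intro hc; exact absurd (hB₁ ν hc) hsp
        · intro hc; exact absurd (hBsp ν hc) hsp
    have hW₁W : W₁ = W' := by
      ext b
      by_cases hb : b ∈ D.inputs ∪ D.outputs
      · rw [keyZ b hb, memW b hb]
      · constructor
        · intro hc; exact absurd (hW₁ hc) hb
        · intro hc; exact absurd (hWsub hc) hb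
    rw [hB₁B, hW₁W]
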